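/- arXiv:2102.07502 — 3 statements merged into one kernel-verified Lean document; each statement's English description precedes it below -/
import Mathlib

section
/- Let f ∈ ℱ and let (X,σ) be a metric space with a convex geodesic bicombing. Then for any two σ-geodesic lines γ, γ', d(γ(0), γ'(0)) ≤ ∫_{-∞}^{∞} d(γ(s), γ'(s)) f(s) ds. Consequently the formula f(γ,γ') = ∫_{-∞}^{∞} d(γ(s),γ'(s)) f(s) ds defines a metric on the set of σ-geodesic lines for which the evaluation map γ ↦ γ(0) is 1-Lipschitz. -/
/-!
Along two σ-geodesic lines the distance `s ↦ d(γ s, γ' s)` is convex, so its value at `0` is at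
most the mean of its values at `s` and `-s`. Integrating against the even probability density `f`
gives `d(γ 0, γ' 0) ≤ ∫ d(γ s, γ' s) f(s) ds`; the linear growth of the distance and the finite
first moment of `f` make the integral finite. The metric axioms hold pointwise under the integral,
and separation follows from `f > 0` together with continuity of the distance.
-/

open MeasureTheory

/-- A convex geodesic bicombing on a metric space `X`. -/
structure ConvexBicombing (X : Type*) [MetricSpace X] where
  σ : X → X → ℝ → X
  source : ∀ x y, σ x y 0 = x
  target : ∀ x y, σ x y 1 = y
  geodesic : ∀ x y, ∀ s ∈ Set.Icc (0 : ℝ) 1, ∀ t ∈ Set.Icc (0 : ℝ) 1,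
    dist (σ x y s) (σ x y t) = |s - t| * dist x y
  convex : ∀ x y x' y', ConvexOn ℝ (Set.Icc (0 : ℝ) 1)
    (fun t => dist (σ x y t) (σ x' y' t))

/-- A geodesic line: an isometric embedding `ℝ → X`. -/
def IsGeodLine {X : Type*} [MetricSpace X] (γ : ℝ → X) : Prop :=
  ∀ s t : ℝ, dist (γ s) (γ t) = |s - t|

/-- A `σ`-geodesic line. -/
def IsSigmaLine {X : Type*} [MetricSpace X] (B : ConvexBicombing X) (γ : ℝ → X) : Prop :=
  IsGeodLine γ ∧ ∀ s t : ℝ, s ≤ t → ∀ u ∈ Set.Icc (0 : ℝ) 1,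
    B.σ (γ s) (γ t) u = γ (s + u * (t - s))

open Set

section GeodesicLines

variable {X : Type*} [MetricSpace X]

theorem IsGeodLine.lipschitzWith_one {γ : ℝ → X} (hγ : IsGeodLine γ) : LipschitzWith 1 γ :=
  LipschitzWith.of_dist_le_mul fun s t => by rw [hγ s t, Real.dist_eq]; simp

theorem IsGeodLine.continuous {γ : ℝ → X} (hγ : IsGeodLine γ) : Continuous γ :=
  hγ.lipschitzWith_one.continuous

theorem IsGeodLine.dist_le_dist_zero_add {γ γ' : ℝ → X} (hγ : IsGeodLine γ)
    (hγ' : IsGeodLine γ') (s : ℝ) : dist (γ s) (γ' s) ≤ dist (γ 0) (γ' 0) + 2 * |s| := by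
  have h := dist_triangle4 (γ s) (γ 0) (γ' 0) (γ' s)
  rw [hγ s 0, hγ' 0 s, sub_zero, zero_sub, abs_neg] at h
  linarith

theorem IsGeodLine.integrable_dist_mul {γ γ' : ℝ → X} (hγ : IsGeodLine γ)
    (hγ' : IsGeodLine γ') {f : ℝ → ℝ} (hf : ∀ s, 0 ≤ f s) (hint : Integrable f)
    (hmom : Integrable fun s => 2 * |s| * f s) :
    Integrable fun s => dist (γ s) (γ' s) * f s := by
  refine (hmom.add (hint.const_mul (dist (γ 0) (γ' 0)))).mono'
    ((hγ.continuous.dist hγ'.continuous).aestronglyMeasurable.mul hint.aestronglyMeasurable)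
    (Filter.Eventually.of_forall fun s => ?_)
  rw [Real.norm_of_nonneg (mul_nonneg dist_nonneg (hf s)), Pi.add_apply]
  nlinarith [mul_le_mul_of_nonneg_right (hγ.dist_le_dist_zero_add hγ' s) (hf s)]

theorem IsSigmaLine.convexOn_dist {B : ConvexBicombing X} {γ γ' : ℝ → X}
    (hγ : IsSigmaLine B γ) (hγ' : IsSigmaLine B γ') :
    ConvexOn ℝ univ fun s => dist (γ s) (γ' s) := by
  refine LinearOrder.convexOn_of_lt convex_univ fun x _ y _ hxy a b ha hb hab => ?_
  have hb' : b ∈ Icc (0 : ℝ) 1 := ⟨hb.le, by linarith⟩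
  have hc := (B.convex (γ x) (γ y) (γ' x) (γ' y)).2 (left_mem_Icc.2 zero_le_one)
    (right_mem_Icc.2 zero_le_one) ha.le hb.le hab
  simp only [smul_eq_mul, mul_zero, mul_one, zero_add, B.source, B.target,
    hγ.2 x y hxy.le b hb', hγ'.2 x y hxy.le b hb'] at hc ⊢
  rwa [show a * x + b * y = x + b * (y - x) by rw [eq_sub_of_add_eq hab]; ring]

end GeodesicLines

theorem ConvexOn.le_integral_mul_of_even {g f : ℝ → ℝ} (hg : ConvexOn ℝ univ g)
    (hf : ∀ s, 0 ≤ f s) (heven : ∀ s, f (-s) = f s) (hint : Integrable f)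
    (hone : ∫ s, f s = 1) (hgf : Integrable fun s => g s * f s) :
    g 0 ≤ ∫ s, g s * f s := by
  have hgf_neg : Integrable fun s => g (-s) * f s := by simpa only [heven] using hgf.comp_neg
  have h_reflect : ∫ s, g (-s) * f s = ∫ s, g s * f s := by
    simpa only [heven] using integral_neg_eq_self (fun s => g s * f s) volume
  have h_mid : ∀ s, g 0 ≤ (g s + g (-s)) / 2 := fun s => by
    have := hg.2 (mem_univ s) (mem_univ (-s)) (by norm_num : (0 : ℝ) ≤ 1 / 2)
      (by norm_num : (0 : ℝ) ≤ 1 / 2) (by norm_num)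
    simp only [smul_eq_mul] at this
    rw [show (1 / 2 : ℝ) * s + 1 / 2 * -s = 0 by ring] at this
    linarith
  calc g 0 = ∫ s, g 0 * f s := by rw [integral_const_mul, hone, mul_one]
    _ ≤ ∫ s, (g s * f s + g (-s) * f s) / 2 :=
        integral_mono (hint.const_mul _) ((hgf.add hgf_neg).div_const 2) fun s => by
          nlinarith [mul_le_mul_of_nonneg_right (h_mid s) (hf s)]
    _ = ∫ s, g s * f s := by rw [integral_div, integral_add hgf hgf_neg, h_reflect]; ring

theorem Continuous.eq_zero_of_integral_mul_eq_zero {g f : ℝ → ℝ} (hg : Continuous g)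
    (hg0 : 0 ≤ g) (hf : ∀ s, 0 < f s) (hgf : Integrable fun s => g s * f s)
    (h : ∫ s, g s * f s = 0) : g = 0 := by
  have hgf_ae : (fun s => g s * f s) =ᵐ[volume] 0 :=
    (integral_eq_zero_iff_of_nonneg (fun s => mul_nonneg (hg0 s) (hf s).le) hgf).1 h
  have hg_ae : g =ᵐ[volume] 0 := hgf_ae.mono fun s hs =>
    (mul_eq_zero.1 hs).resolve_right (hf s).ne'
  exact (hg.ae_eq_iff_eq volume continuous_const).1 hg_ae

theorem fdist_is_metric_eval_lipschitz_general {X : Type*} [MetricSpace X] (B : ConvexBicombing X)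
    (f : ℝ → ℝ) (hpos : ∀ s, 0 < f s) (heven : ∀ s, f (-s) = f s)
    (hint : Integrable f) (hone : ∫ s, f s = 1)
    (hmom : Integrable (fun s => 2 * |s| * f s)) :
    (∀ γ γ' : ℝ → X, IsSigmaLine B γ → IsSigmaLine B γ' →
        dist (γ 0) (γ' 0) ≤ ∫ s, dist (γ s) (γ' s) * f s) ∧
    (∀ γ γ' : ℝ → X, IsSigmaLine B γ → IsSigmaLine B γ' →
        ∫ s, dist (γ s) (γ' s) * f s = ∫ s, dist (γ' s) (γ s) * f s) ∧
    (∀ γ γ' γ'' : ℝ → X, IsSigmaLine B γ → IsSigmaLine B γ' → IsSigmaLine B γ'' →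
        ∫ s, dist (γ s) (γ'' s) * f s ≤
          (∫ s, dist (γ s) (γ' s) * f s) + ∫ s, dist (γ' s) (γ'' s) * f s) ∧
    (∀ γ γ' : ℝ → X, IsSigmaLine B γ → IsSigmaLine B γ' →
        (∫ s, dist (γ s) (γ' s) * f s) = 0 → γ = γ') := by
  have hf : ∀ s, 0 ≤ f s := fun s => (hpos s).le
  have hint_dist : ∀ {γ γ' : ℝ → X}, IsSigmaLine B γ → IsSigmaLine B γ' →
      Integrable fun s => dist (γ s) (γ' s) * f s := fun hγ hγ' =>
    hγ.1.integrable_dist_mul hγ'.1 hf hint hmom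
  refine ⟨fun γ γ' hγ hγ' => ?_, fun γ γ' _ _ => ?_, fun γ γ' γ'' hγ hγ' hγ'' => ?_,
    fun γ γ' hγ hγ' h => ?_⟩
  · exact (hγ.convexOn_dist hγ').le_integral_mul_of_even hf heven hint hone (hint_dist hγ hγ')
  · simp_rw [dist_comm]
  · rw [← integral_add (hint_dist hγ hγ') (hint_dist hγ' hγ'')]
    refine integral_mono (hint_dist hγ hγ'') ((hint_dist hγ hγ').add (hint_dist hγ' hγ''))
      fun s => ?_
    simpa only [add_mul] using
      mul_le_mul_of_nonneg_right (dist_triangle (γ s) (γ' s) (γ'' s)) (hf s)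
  · funext s
    exact dist_eq_zero.1 <| congrFun ((hγ.1.continuous.dist hγ'.1.continuous)
      |>.eq_zero_of_integral_mul_eq_zero (fun _ => dist_nonneg) hpos (hint_dist hγ hγ') h) s

/-- Let `f ∈ ℱ` (continuous, positive, even, `∫ f = 1`, finite first
moment) and let `X` carry a convex geodesic bicombing. For any two `σ`-geodesic lines,
`d(γ(0), γ'(0)) ≤ ∫ d(γ(s), γ'(s)) f(s) ds`; consequently
`f(γ, γ') = ∫ d(γ(s), γ'(s)) f(s) ds` is a metric on the set of `σ`-geodesic lines
(symmetric, triangle inequality, separating points) for which the evaluation map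
`γ ↦ γ(0)` is 1-Lipschitz. -/
theorem fdist_is_metric_eval_lipschitz {X : Type*} [MetricSpace X] (B : ConvexBicombing X)
    (f : ℝ → ℝ) (hcont : Continuous f) (hpos : ∀ s, 0 < f s) (heven : ∀ s, f (-s) = f s)
    (hint : Integrable f) (hone : ∫ s, f s = 1)
    (hmom : Integrable (fun s => 2 * |s| * f s)) :
    (∀ γ γ' : ℝ → X, IsSigmaLine B γ → IsSigmaLine B γ' →
        dist (γ 0) (γ' 0) ≤ ∫ s, dist (γ s) (γ' s) * f s) ∧
    (∀ γ γ' : ℝ → X, IsSigmaLine B γ → IsSigmaLine B γ' →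
        ∫ s, dist (γ s) (γ' s) * f s = ∫ s, dist (γ' s) (γ s) * f s) ∧
    (∀ γ γ' γ'' : ℝ → X, IsSigmaLine B γ → IsSigmaLine B γ' → IsSigmaLine B γ'' →
        ∫ s, dist (γ s) (γ'' s) * f s ≤
          (∫ s, dist (γ s) (γ' s) * f s) + ∫ s, dist (γ' s) (γ'' s) * f s) ∧
    (∀ γ γ' : ℝ → X, IsSigmaLine B γ → IsSigmaLine B γ' →
        (∫ s, dist (γ s) (γ' s) * f s) = 0 → γ = γ') :=
  fdist_is_metric_eval_lipschitz_general B f hpos heven hint hone hmom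
end

section
/- Let X be a metric space in which for every pair of points and every extension parameter geodesics can be extended (e.g. a GCB-space), and suppose X is P₀-packed at scale r₀, i.e. Pack(3r₀, r₀) ≤ P₀. Then for every x ∈ X and R ≥ r₀, Pack(B̄(x,R), r₀) ≤ P₀(1+P₀)^{R/r₀ - 1}. Consequently the upper covering entropy of X satisfies h_Cov(X) := limsup_{T→∞} (1/T) log Cov(B̄(x,T), r₀) ≤ log(1+P₀)/r₀. -/
open Filter

/-- A GCB-space structure: a convex, consistent, reversible, geodesically complete
geodesic bicombing (geodesic completeness: every pair of points lies on a `σ`-geodesic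
line, i.e. every `σ`-geodesic segment extends to a `σ`-geodesic line). -/
structure GCB (X : Type*) [MetricSpace X] extends ConvexBicombing X where
  consistent : ∀ x y : X, ∀ s t : ℝ, 0 ≤ s → s ≤ t → t ≤ 1 → ∀ u ∈ Set.Icc (0 : ℝ) 1,
    σ (σ x y s) (σ x y t) u = σ x y ((1 - u) * s + u * t)
  reversible : ∀ x y : X, ∀ t ∈ Set.Icc (0 : ℝ) 1, σ x y t = σ y x (1 - t)
  complete : ∀ x y : X, ∃ γ : ℝ → X,
    IsSigmaLine toConvexBicombing γ ∧ γ 0 = x ∧ γ (dist x y) = y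

def IsSeparated' {X : Type*} [MetricSpace X] (r : ℝ) (S : Set X) : Prop :=
  S.Pairwise fun a b => r < dist a b

/-- Maximal cardinality of a `2r`-separated subset of `Y`. -/
noncomputable def packNum {X : Type*} [MetricSpace X] (Y : Set X) (r : ℝ) : ℕ∞ :=
  ⨆ S : {S : Set X // S ⊆ Y ∧ IsSeparated' (2 * r) S}, (S : Set X).encard

/-- Minimal cardinality of an `r`-dense subset of `Y`. -/
noncomputable def covNum {X : Type*} [MetricSpace X] (Y : Set X) (r : ℝ) : ℕ∞ :=
  ⨅ S : {S : Set X // S ⊆ Y ∧ ∀ y ∈ Y, ∃ z ∈ S, dist y z ≤ r}, (S : Set X).encard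

set_option linter.unusedSectionVars false
set_option linter.unusedVariables false


section Geo
variable {X : Type*} [MetricSpace X]

lemma sigma_dist_le (B : ConvexBicombing X) (x a b : X) {u : ℝ} (h0 : 0 ≤ u) (h1 : u ≤ 1) :
    dist (B.σ x a u) (B.σ x b u) ≤ u * dist a b := by
  have hc := (B.convex x a x b).2 (Set.left_mem_Icc.2 zero_le_one)
    (Set.right_mem_Icc.2 zero_le_one) (by linarith : (0:ℝ) ≤ 1 - u) h0 (by ring)
  simp only [smul_eq_mul, mul_zero, mul_one, zero_add] at hc
  rw [B.source, B.source, B.target, B.target, dist_self] at hc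
  simpa using hc

lemma proj_lemma (B : ConvexBicombing X) (x y : X) {r R : ℝ} (hr : 0 ≤ r) (hrR : r ≤ R)
    (hy : dist x y ≤ R) : ∃ p : X, dist x p ≤ R - r ∧ dist y p ≤ r := by
  by_cases hd : dist x y ≤ r
  · exact ⟨x, by simp [dist_self]; linarith, by rw [dist_comm]; exact hd⟩
  · push_neg at hd
    have hd0 : 0 < dist x y := lt_of_le_of_lt hr hd
    set d := dist x y with hdd
    set t := (d - r) / d with htdef
    have ht0 : 0 ≤ t := div_nonneg (by linarith) hd0.le
    have ht1 : t ≤ 1 := by rw [div_le_one hd0]; linarith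
    refine ⟨B.σ x y t, ?_, ?_⟩
    · have h := B.geodesic x y 0 (Set.left_mem_Icc.2 zero_le_one) t ⟨ht0, ht1⟩
      rw [B.source] at h
      rw [h]
      have : |0 - t| = t := by rw [abs_of_nonpos (by linarith)]; ring
      rw [this, htdef, div_mul_cancel₀ _ hd0.ne']
      linarith
    · have h := B.geodesic x y 1 (Set.right_mem_Icc.2 zero_le_one) t ⟨ht0, ht1⟩
      rw [B.target] at h
      rw [h]
      have h1t : |1 - t| = 1 - t := abs_of_nonneg (by linarith)
      rw [h1t, htdef]
      have : (1 - (d - r) / d) * d = r := by field_simp; ring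
      rw [this]

lemma exists_doubling (B : GCB X) (z : X) :
    ∃ H : X → X, (∀ y, dist z (H y) = 2 * dist z y) ∧
      ∀ y y', 2 * dist y y' ≤ dist (H y) (H y') := by
  choose γ hγ h0 hd using B.complete z
  have hdist0 : ∀ y, 0 ≤ dist z y := fun y => dist_nonneg
  refine ⟨fun y => γ y (2 * dist z y), fun y => ?_, fun y y' => ?_⟩
  · have := (hγ y).1 0 (2 * dist z y)
    rw [h0] at this
    rw [this, abs_of_nonpos (by linarith [hdist0 y])]
    ring
  · have key : ∀ w : X, B.σ z (γ w (2 * dist z w)) (1/2) = w := by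
      intro w
      have h := (hγ w).2 0 (2 * dist z w) (by linarith [hdist0 w]) (1/2)
        ⟨by norm_num, by norm_num⟩
      rw [h0] at h
      rw [h]
      have : 0 + 1/2 * (2 * dist z w - 0) = dist z w := by ring
      rw [this, hd]
    have hle := sigma_dist_le B.toConvexBicombing z (γ y (2 * dist z y))
      (γ y' (2 * dist z y')) (u := 1/2) (by norm_num) (by norm_num)
    rw [key y, key y'] at hle
    linarith

end Geo


section Aux
variable {X : Type*} [MetricSpace X]

lemma exists_maximal_sep (r : ℝ) (hr : 0 ≤ r) (Y : Set X) :
    ∃ S : Set X, S ⊆ Y ∧ IsSeparated' r S ∧ ∀ y ∈ Y, ∃ z ∈ S, dist y z ≤ r := by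
  have hzorn : ∀ c ⊆ {S : Set X | S ⊆ Y ∧ IsSeparated' r S}, IsChain (· ⊆ ·) c →
      ∃ ub ∈ {S : Set X | S ⊆ Y ∧ IsSeparated' r S}, ∀ s ∈ c, s ⊆ ub := by
    intro c hc hchain
    refine ⟨⋃₀ c, ⟨Set.sUnion_subset fun s hs => (hc hs).1, ?_⟩,
      fun s hs => Set.subset_sUnion_of_mem hs⟩
    intro a ha b hb hab
    obtain ⟨s, hs, has⟩ := ha
    obtain ⟨t, ht, hbt⟩ := hb
    rcases hchain.total hs ht with h | h
    · exact (hc ht).2 (h has) hbt hab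
    · exact (hc hs).2 has (h hbt) hab
  obtain ⟨S, hS⟩ := zorn_subset {S : Set X | S ⊆ Y ∧ IsSeparated' r S} hzorn
  refine ⟨S, hS.prop.1, hS.prop.2, ?_⟩
  intro y hy
  by_contra h
  push_neg at h
  have hyS : y ∉ S := by
    intro hyS
    have := h y hyS
    rw [dist_self] at this
    exact absurd hr (not_le.2 this)
  have hmem : insert y S ∈ {S : Set X | S ⊆ Y ∧ IsSeparated' r S} := by
    refine ⟨Set.insert_subset hy hS.prop.1, ?_⟩
    exact hS.prop.2.insert fun b hb hne => ⟨h b hb, by rw [dist_comm]; exact h b hb⟩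
  exact hyS (hS.2 hmem (Set.subset_insert y S) (Set.mem_insert y S))

lemma encard_cover_bound {C : ℕ∞} {f : X → Set X} {Z : Set X} (hZ : Z.Finite) :
    ∀ S : Set X, (S ⊆ ⋃ z ∈ Z, f z) → (∀ z ∈ Z, (S ∩ f z).encard ≤ C) →
      S.encard ≤ Z.encard * C := by
  refine Set.Finite.induction_on (motive := fun Z _ => ∀ S : Set X, (S ⊆ ⋃ z ∈ Z, f z) →
      (∀ z ∈ Z, (S ∩ f z).encard ≤ C) → S.encard ≤ Z.encard * C) Z hZ ?_ @?_
  case refine_1 =>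
    intro S hcov _
    simp only [Set.mem_empty_iff_false, Set.iUnion_of_empty, Set.iUnion_empty,
      Set.subset_empty_iff] at hcov
    simp [hcov]
  case refine_2 =>
    intro a Z₀ ha hfin ih
    intro S hcov hC
    have h1 : (S ∩ f a).encard ≤ C := hC a (Set.mem_insert a Z₀)
    have h2 : (S \ f a) ⊆ ⋃ z ∈ Z₀, f z := by
      intro y hy
      obtain ⟨hyS, hyf⟩ := hy
      obtain ⟨z, hz, hyz⟩ := Set.mem_iUnion₂.1 (hcov hyS)
      rcases Set.mem_insert_iff.1 hz with rfl | hz'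
      · exact absurd hyz hyf
      · exact Set.mem_iUnion₂.2 ⟨z, hz', hyz⟩
    have h3 : (S \ f a).encard ≤ Z₀.encard * C :=
      ih _ h2 fun z hz => le_trans (Set.encard_le_encard
        (Set.inter_subset_inter_left _ Set.diff_subset)) (hC z (Set.mem_insert_of_mem a hz))
    calc S.encard = ((S ∩ f a) ∪ (S \ f a)).encard := by rw [Set.inter_union_diff]
      _ ≤ (S ∩ f a).encard + (S \ f a).encard := Set.encard_union_le _ _
      _ ≤ C + Z₀.encard * C := add_le_add h1 h3
      _ = (insert a Z₀).encard * C := by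
        rw [Set.encard_insert_of_notMem ha, add_mul, one_mul, add_comm]

end Aux



section Count
variable {X : Type*} [MetricSpace X]

lemma encard_le_packNum {Y S : Set X} {r : ℝ} (h1 : S ⊆ Y) (h2 : IsSeparated' (2 * r) S) :
    S.encard ≤ packNum Y r :=
  le_iSup (fun T : {T : Set X // T ⊆ Y ∧ IsSeparated' (2 * r) T} => (T : Set X).encard)
    ⟨S, h1, h2⟩

lemma covNum_le_encard {Y S : Set X} {r : ℝ} (h1 : S ⊆ Y)
    (h2 : ∀ y ∈ Y, ∃ z ∈ S, dist y z ≤ r) : covNum Y r ≤ S.encard :=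
  iInf_le (fun T : {T : Set X // T ⊆ Y ∧ ∀ y ∈ Y, ∃ z ∈ T, dist y z ≤ r} =>
    (T : Set X).encard) ⟨S, h1, h2⟩

variable {P₀ : ℕ} {r₀ : ℝ}

lemma packQ (B : GCB X) (hr₀ : 0 < r₀)
    (hpack : ∀ x : X, packNum (Metric.closedBall x (3 * r₀)) r₀ ≤ (P₀ : ℕ∞))
    (hP1 : 1 ≤ P₀) :
    ∀ n : ℕ, ∀ x : X, ∀ R : ℝ, R ≤ ((n : ℝ) + 3) * r₀ →
      ∀ S : Set X, S ⊆ Metric.closedBall x R → IsSeparated' (2 * r₀) S →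
        S.encard ≤ ((P₀ ^ (n + 1) : ℕ) : ℕ∞) := by
  intro n
  induction n with
  | zero =>
    intro x R hR S hsub hsep
    have hsub' : S ⊆ Metric.closedBall x (3 * r₀) :=
      hsub.trans (Metric.closedBall_subset_closedBall (by push_cast at hR; linarith))
    refine le_trans (le_trans (encard_le_packNum hsub' hsep) (hpack x)) ?_
    simp
  | succ n ih =>
    intro x R hR S hsub hsep
    by_cases hR3 : R ≤ 3 * r₀
    · have hsub' : S ⊆ Metric.closedBall x (3 * r₀) :=
        hsub.trans (Metric.closedBall_subset_closedBall hR3)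
    -- S.encard ≤ P₀ ≤ P₀^(n+2)
      refine le_trans (le_trans (encard_le_packNum hsub' hsep) (hpack x)) ?_
      exact_mod_cast Nat.le_self_pow (Nat.succ_ne_zero _) P₀
    · push_neg at hR3
      have hproj : ∀ y ∈ S, ∃ p, dist x p ≤ R - r₀ ∧ dist y p ≤ r₀ := by
        intro y hy
        exact proj_lemma B.toConvexBicombing x y hr₀.le (by linarith)
          (by rw [dist_comm]; exact Metric.mem_closedBall.1 (hsub hy))
      choose! π hπ1 hπ2 using hproj
      set A : Set X := π '' S with hA
      have hAsub : A ⊆ Metric.closedBall x (R - r₀) := by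
        rintro p ⟨y, hy, rfl⟩
        rw [Metric.mem_closedBall, dist_comm]
        exact hπ1 y hy
      obtain ⟨T, hTA, hTsep, hTmax⟩ := exists_maximal_sep (2 * r₀) (by positivity) A
      have hT : T.encard ≤ ((P₀ ^ (n + 1) : ℕ) : ℕ∞) :=
        ih x (R - r₀) (by push_cast at hR ⊢; linarith) T (hTA.trans hAsub) hTsep
      have hTfin : T.Finite := by
        rw [← Set.encard_ne_top_iff]
        exact ne_top_of_le_ne_top (WithTop.natCast_ne_top _) hT
      have hcov : S ⊆ ⋃ z ∈ T, Metric.closedBall z (3 * r₀) := by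
        intro y hy
        obtain ⟨z, hz, hdz⟩ := hTmax (π y) ⟨y, hy, rfl⟩
        refine Set.mem_iUnion₂.2 ⟨z, hz, ?_⟩
        rw [Metric.mem_closedBall]
        calc dist y z ≤ dist y (π y) + dist (π y) z := dist_triangle _ _ _
          _ ≤ r₀ + 2 * r₀ := add_le_add (hπ2 y hy) hdz
          _ = 3 * r₀ := by ring
      have hpiece : ∀ z ∈ T, (S ∩ Metric.closedBall z (3 * r₀)).encard ≤ (P₀ : ℕ∞) :=
        fun z _ => le_trans (encard_le_packNum Set.inter_subset_right
          (hsep.mono Set.inter_subset_left)) (hpack z)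
      calc S.encard ≤ T.encard * (P₀ : ℕ∞) := encard_cover_bound hTfin S hcov hpiece
        _ ≤ ((P₀ ^ (n + 1) : ℕ) : ℕ∞) * (P₀ : ℕ∞) := mul_le_mul_left hT _
        _ = ((P₀ ^ (n + 2) : ℕ) : ℕ∞) := by
            rw [← Nat.cast_mul, ← pow_succ]

lemma halfscale (B : GCB X) (hr₀ : 0 < r₀)
    (hpack : ∀ x : X, packNum (Metric.closedBall x (3 * r₀)) r₀ ≤ (P₀ : ℕ∞))
    (hP1 : 1 ≤ P₀) (z : X) (W : Set X) (hWsub : W ⊆ Metric.closedBall z (2 * r₀))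
    (hWsep : IsSeparated' r₀ W) : W.encard ≤ ((P₀ ^ 2 : ℕ) : ℕ∞) := by
  obtain ⟨H, hH1, hH2⟩ := exists_doubling B z
  have hinj : Set.InjOn H W := by
    intro a ha b hb hab
    by_contra hne
    have h1 := hWsep ha hb hne
    have h2 := hH2 a b
    rw [hab, dist_self] at h2
    have := dist_nonneg (x := a) (y := b)
    nlinarith
  have himgsub : H '' W ⊆ Metric.closedBall z (4 * r₀) := by
    rintro p ⟨y, hy, rfl⟩
    rw [Metric.mem_closedBall, dist_comm, hH1 y]
    have : dist z y ≤ 2 * r₀ := by rw [dist_comm]; exact Metric.mem_closedBall.1 (hWsub hy)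
    linarith
  have himgsep : IsSeparated' (2 * r₀) (H '' W) := by
    rintro _ ⟨a, ha, rfl⟩ _ ⟨b, hb, rfl⟩ hne
    have hab : a ≠ b := fun h => hne (by rw [h])
    have := hWsep ha hb hab
    have h2 := hH2 a b
    linarith
  have := packQ B hr₀ hpack hP1 1 z (4 * r₀) (by norm_num) (H '' W) himgsub himgsep
  rwa [hinj.encard_image] at this

end Count

section Main
variable {X : Type*} [MetricSpace X] {P₀ : ℕ} {r₀ : ℝ}

lemma one_le_P (hr₀ : 0 < r₀)
    (hpack : ∀ x : X, packNum (Metric.closedBall x (3 * r₀)) r₀ ≤ (P₀ : ℕ∞)) (x : X) :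
    1 ≤ P₀ := by
  have hsub : ({x} : Set X) ⊆ Metric.closedBall x (3 * r₀) := by
    intro y hy
    rw [Set.mem_singleton_iff] at hy
    subst hy
    rw [Metric.mem_closedBall, dist_self]
    positivity
  have h := (encard_le_packNum hsub (Set.pairwise_singleton _ _)).trans (hpack x)
  rw [Set.encard_singleton] at h
  exact_mod_cast h

theorem packed_packing_bound_and_entropy_bound' {X : Type*} [MetricSpace X] [CompleteSpace X]
    (B : GCB X) (P₀ : ℕ) (r₀ : ℝ) (hr₀ : 0 < r₀)
    (hpack : ∀ x : X, packNum (Metric.closedBall x (3 * r₀)) r₀ ≤ (P₀ : ℕ∞)) :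
    (∀ x : X, ∀ R : ℝ, r₀ ≤ R →
        packNum (Metric.closedBall x R) r₀ ≠ ⊤ ∧
        ((packNum (Metric.closedBall x R) r₀).toNat : ℝ) ≤
          (P₀ : ℝ) * (1 + (P₀ : ℝ)) ^ (R / r₀ - 1)) ∧
    ∀ x : X,
      limsup (fun T : ℝ =>
          (1 / T) * Real.log ((covNum (Metric.closedBall x T) r₀).toNat)) atTop ≤
        Real.log (1 + (P₀ : ℝ)) / r₀ := by
  constructor
  · intro x R hR
    have hP1 := one_le_P hr₀ hpack x
    set n := ⌈R / r₀ - 3⌉₊ with hn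
    have hceil : R / r₀ - 3 ≤ (n : ℝ) := Nat.le_ceil _
    have hRn : R ≤ ((n : ℝ) + 3) * r₀ := by
      have h2 : R / r₀ ≤ (n : ℝ) + 3 := by linarith
      calc R = R / r₀ * r₀ := by field_simp
        _ ≤ ((n : ℝ) + 3) * r₀ := mul_le_mul_of_nonneg_right h2 hr₀.le
    have hbound : packNum (Metric.closedBall x R) r₀ ≤ ((P₀ ^ (n + 1) : ℕ) : ℕ∞) := by
      rw [packNum]
      refine iSup_le ?_
      rintro ⟨S, hsub, hsep⟩
      exact packQ B hr₀ hpack hP1 n x R hRn S hsub hsep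
    refine ⟨ne_top_of_le_ne_top (WithTop.natCast_ne_top _) hbound, ?_⟩
    have htn : (packNum (Metric.closedBall x R) r₀).toNat ≤ P₀ ^ (n + 1) := by
      have := ENat.toNat_le_toNat hbound (WithTop.natCast_ne_top _)
      simpa only [ENat.toNat_natCast] using this
    have hnle : (n : ℝ) ≤ R / r₀ - 1 := by
      rcases Nat.eq_zero_or_pos n with h0 | hpos
      · rw [h0]
        have : 1 ≤ R / r₀ := (one_le_div hr₀).2 hR
        push_cast
        linarith
      · have ha : 0 ≤ R / r₀ - 3 := by
          by_contra hcon
          push_neg at hcon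
          have : n = 0 := Nat.ceil_eq_zero.2 hcon.le
          omega
        have hc : (n : ℝ) < (R / r₀ - 3) + 1 := by
          rw [hn]; exact Nat.ceil_lt_add_one ha
        linarith
    have h1P : (1 : ℝ) ≤ 1 + (P₀ : ℝ) := le_add_of_nonneg_right (Nat.cast_nonneg _)
    calc ((packNum (Metric.closedBall x R) r₀).toNat : ℝ) ≤ ((P₀ ^ (n + 1) : ℕ) : ℝ) := by
          exact_mod_cast htn
      _ = (P₀ : ℝ) * (P₀ : ℝ) ^ n := by push_cast; ring
      _ ≤ (P₀ : ℝ) * (1 + (P₀ : ℝ)) ^ n :=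
          mul_le_mul_of_nonneg_left (pow_le_pow_left₀ (by positivity) (by linarith) n)
            (by positivity)
      _ = (P₀ : ℝ) * (1 + (P₀ : ℝ)) ^ ((n : ℕ) : ℝ) := by rw [Real.rpow_natCast]
      _ ≤ (P₀ : ℝ) * (1 + (P₀ : ℝ)) ^ (R / r₀ - 1) :=
          mul_le_mul_of_nonneg_left
            (Real.rpow_le_rpow_of_exponent_le h1P hnle) (by positivity)
  · intro x
    have hP1 := one_le_P hr₀ hpack x
    set L := Real.log (1 + (P₀ : ℝ)) with hL
    have h1P : (1 : ℝ) ≤ 1 + (P₀ : ℝ) := le_add_of_nonneg_right (Nat.cast_nonneg _)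
    have hL0 : 0 ≤ L := Real.log_nonneg h1P
    set f := fun T : ℝ => (1 / T) * Real.log ((covNum (Metric.closedBall x T) r₀).toNat) with hf
    have hf0 : ∀ᶠ T in atTop, 0 ≤ f T := by
      filter_upwards [eventually_gt_atTop (0 : ℝ)] with T hT
      apply mul_nonneg (by positivity)
      exact Real.log_natCast_nonneg _
    have hcob : IsCoboundedUnder (· ≤ ·) atTop f := isCoboundedUnder_le_of_eventually_le atTop hf0
    have hev : ∀ᶠ T in atTop, f T ≤ L / r₀ + L / T := by
      filter_upwards [eventually_ge_atTop (3 * r₀), eventually_gt_atTop (0 : ℝ)] with T hT3 hT0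
      set m := ⌈T / r₀ - 3⌉₊ with hm
      have hceil : T / r₀ - 3 ≤ (m : ℝ) := Nat.le_ceil _
      have hTm : T ≤ ((m : ℝ) + 3) * r₀ := by
        have h2 : T / r₀ ≤ (m : ℝ) + 3 := by linarith
        calc T = T / r₀ * r₀ := by field_simp
          _ ≤ ((m : ℝ) + 3) * r₀ := mul_le_mul_of_nonneg_right h2 hr₀.le
      obtain ⟨S, hSsub, hSsep, hSmax⟩ := exists_maximal_sep r₀ hr₀.le (Metric.closedBall x T)
      obtain ⟨Z, hZS, hZsep, hZmax⟩ := exists_maximal_sep (2 * r₀) (by positivity) S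
      have hZcard : Z.encard ≤ ((P₀ ^ (m + 1) : ℕ) : ℕ∞) :=
        packQ B hr₀ hpack hP1 m x T hTm Z (hZS.trans hSsub) hZsep
      have hZfin : Z.Finite := by
        rw [← Set.encard_ne_top_iff]
        exact ne_top_of_le_ne_top (WithTop.natCast_ne_top _) hZcard
      have hScov : S ⊆ ⋃ z ∈ Z, Metric.closedBall z (2 * r₀) := by
        intro y hy
        obtain ⟨z, hz, hdz⟩ := hZmax y hy
        exact Set.mem_iUnion₂.2 ⟨z, hz, Metric.mem_closedBall.2 hdz⟩
      have hpiece : ∀ z ∈ Z, (S ∩ Metric.closedBall z (2 * r₀)).encard ≤ ((P₀ ^ 2 : ℕ) : ℕ∞) :=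
        fun z _ => halfscale B hr₀ hpack hP1 z _ Set.inter_subset_right
          (hSsep.mono Set.inter_subset_left)
      have hScard : S.encard ≤ ((P₀ ^ (m + 3) : ℕ) : ℕ∞) := by
        calc S.encard ≤ Z.encard * ((P₀ ^ 2 : ℕ) : ℕ∞) :=
              encard_cover_bound hZfin S hScov hpiece
          _ ≤ ((P₀ ^ (m + 1) : ℕ) : ℕ∞) * ((P₀ ^ 2 : ℕ) : ℕ∞) := mul_le_mul_left hZcard _
          _ = ((P₀ ^ (m + 3) : ℕ) : ℕ∞) := by rw [← Nat.cast_mul, ← pow_add]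
      have hcovle : covNum (Metric.closedBall x T) r₀ ≤ ((P₀ ^ (m + 3) : ℕ) : ℕ∞) :=
        le_trans (covNum_le_encard hSsub hSmax) hScard
      have htn : (covNum (Metric.closedBall x T) r₀).toNat ≤ P₀ ^ (m + 3) := by
        have := ENat.toNat_le_toNat hcovle (WithTop.natCast_ne_top _)
        simpa only [ENat.toNat_natCast] using this
      have hlog : Real.log ((covNum (Metric.closedBall x T) r₀).toNat : ℝ) ≤
          ((m : ℝ) + 3) * L := by
        rcases Nat.eq_zero_or_pos (covNum (Metric.closedBall x T) r₀).toNat with h0 | hpos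
        · rw [h0]
          simp only [Nat.cast_zero, Real.log_zero]
          positivity
        · have hP0 : (0 : ℝ) < (P₀ : ℝ) := by exact_mod_cast hP1
          calc Real.log ((covNum (Metric.closedBall x T) r₀).toNat : ℝ) ≤
                Real.log ((P₀ ^ (m + 3) : ℕ) : ℝ) :=
                  Real.log_le_log (by exact_mod_cast hpos) (by exact_mod_cast htn)
            _ = ((m : ℝ) + 3) * Real.log (P₀ : ℝ) := by
                push_cast
                rw [Real.log_pow]
                push_cast
                ring
            _ ≤ ((m : ℝ) + 3) * L :=
                mul_le_mul_of_nonneg_left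
                  (Real.log_le_log hP0 (by linarith)) (by positivity)
      have hm3 : (m : ℝ) + 3 ≤ T / r₀ + 1 := by
        have ha : 0 ≤ T / r₀ - 3 := by
          have : 3 ≤ T / r₀ := by
            rw [le_div_iff₀ hr₀]; linarith
          linarith
        have hc : (m : ℝ) < (T / r₀ - 3) + 1 := by rw [hm]; exact Nat.ceil_lt_add_one ha
        linarith
      calc f T = (1 / T) * Real.log ((covNum (Metric.closedBall x T) r₀).toNat : ℝ) := rfl
        _ ≤ (1 / T) * (((m : ℝ) + 3) * L) := by
            apply mul_le_mul_of_nonneg_left hlog (by positivity)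
        _ ≤ (1 / T) * ((T / r₀ + 1) * L) := by
            apply mul_le_mul_of_nonneg_left
              (mul_le_mul_of_nonneg_right hm3 hL0) (by positivity)
        _ = L / r₀ + L / T := by field_simp
    refine _root_.le_of_forall_pos_le_add ?_
    intro ε hε
    refine limsup_le_of_le hcob ?_
    have h2 : ∀ᶠ T in atTop, L / T ≤ ε := by
      filter_upwards [eventually_ge_atTop (max 1 (L / ε))] with T hT
      have hT1 : (1 : ℝ) ≤ T := le_trans (le_max_left _ _) hT
      have hT2 : L / ε ≤ T := le_trans (le_max_right _ _) hT
      rw [div_le_iff₀ (by linarith)]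
      calc L = (L / ε) * ε := by field_simp
        _ ≤ T * ε := mul_le_mul_of_nonneg_right hT2 hε.le
        _ = ε * T := mul_comm _ _
      -- need ε * T vs T * ε
    filter_upwards [hev, h2] with T h1 h2'
    calc f T ≤ L / r₀ + L / T := h1
      _ ≤ L / r₀ + ε := by linarith

end Main

/-- Let `X` be a complete metric space with a GCB structure which is
`P₀`-packed at scale `r₀`. Then for every `x` and `R ≥ r₀`,
`Pack(B̄(x,R), r₀) ≤ P₀ (1+P₀)^{R/r₀ - 1}` (in particular it is finite), and consequently
the upper covering entropy satisfies
`limsup_{T→∞} (1/T) log Cov(B̄(x,T), r₀) ≤ log(1+P₀)/r₀`. -/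
theorem packed_packing_bound_and_entropy_bound {X : Type*} [MetricSpace X] [CompleteSpace X]
    (B : GCB X) (P₀ : ℕ) (r₀ : ℝ) (hr₀ : 0 < r₀)
    (hpack : ∀ x : X, packNum (Metric.closedBall x (3 * r₀)) r₀ ≤ (P₀ : ℕ∞)) :
    (∀ x : X, ∀ R : ℝ, r₀ ≤ R →
        packNum (Metric.closedBall x R) r₀ ≠ ⊤ ∧
        ((packNum (Metric.closedBall x R) r₀).toNat : ℝ) ≤
          (P₀ : ℝ) * (1 + (P₀ : ℝ)) ^ (R / r₀ - 1)) ∧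
    ∀ x : X,
      limsup (fun T : ℝ =>
          (1 / T) * Real.log ((covNum (Metric.closedBall x T) r₀).toNat)) atTop ≤
        Real.log (1 + (P₀ : ℝ)) / r₀ := packed_packing_bound_and_entropy_bound' B P₀ r₀ hr₀ hpack
end

section
/- Let (X,σ) be a GCB-space, x ∈ X, T > 0, and let E_T be an r₀-dense subset of the sphere S(x,T). For each y ∈ E_T choose a σ-geodesic line γ_y through x at time 0 with γ_y(T) = y (extending [x,y]). Then for every f ∈ ℱ, the family {γ_y}_{y∈E_T} is (r₀ + C(f))-dense in Geod_σ(x) with respect to the metric f^T, where C(f) = ∫ 2|s| f(s) ds. Consequently Cov_{f^T}(Geod_σ(x), r₀ + C(f)) ≤ Cov(S(x,T), r₀). -/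
open Filter MeasureTheory

/-- The dynamical distance `f^T(γ,γ') = max_{t∈[0,T]} ∫ d(γ(s),γ'(s)) f(s−t) ds`. -/
noncomputable def fdT {X : Type*} [MetricSpace X] (f : ℝ → ℝ) (T : ℝ)
    (γ γ' : ℝ → X) : ℝ :=
  sSup ((fun t => ∫ s, dist (γ s) (γ' s) * f (s - t)) '' Set.Icc (0 : ℝ) T)

/-- The set `Geod_σ(x)` of `σ`-geodesic lines through `x` at time `0`. -/
def geodThru {X : Type*} [MetricSpace X] (B : ConvexBicombing X) (x : X) :
    Set (ℝ → X) :=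
  {γ | IsSigmaLine B γ ∧ γ 0 = x}

/-- Minimal cardinality of an `r`-dense subset of `K` for the distance `f^T`. -/
noncomputable def covF {X : Type*} [MetricSpace X] (f : ℝ → ℝ) (T r : ℝ)
    (K : Set (ℝ → X)) : ℕ∞ :=
  ⨅ S : {S : Set (ℝ → X) // S ⊆ K ∧ ∀ γ ∈ K, ∃ γ' ∈ S, fdT f T γ γ' ≤ r},
    (S : Set (ℝ → X)).encard

lemma key {X : Type*} [MetricSpace X] (B : ConvexBicombing X) (x : X) (T r₀ : ℝ)
    (hT : 0 < T) (hr₀ : 0 ≤ r₀)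
    (f : ℝ → ℝ) (hcont : Continuous f) (hpos : ∀ s, 0 < f s)
    (hint : Integrable f) (hone : ∫ s, f s = 1)
    (hmom : Integrable (fun s => 2 * |s| * f s))
    (γ γ' : ℝ → X) (hγ : IsSigmaLine B γ) (hγ' : IsSigmaLine B γ')
    (h0 : γ 0 = x) (h0' : γ' 0 = x) (hd : dist (γ T) (γ' T) ≤ r₀) :
    fdT f T γ γ' ≤ r₀ + ∫ s, 2 * |s| * f s := by
  obtain ⟨hg1, hl1⟩ := hγ
  obtain ⟨hg2, hl2⟩ := hγ'
  have hC : 0 ≤ ∫ s, 2 * |s| * f s := by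
    apply integral_nonneg
    intro s
    exact mul_nonneg (by positivity) (hpos s).le
  -- convexity bound on [0,T]
  have hmid : ∀ s ∈ Set.Icc (0:ℝ) T, dist (γ s) (γ' s) ≤ r₀ := by
    intro s hs
    set u := s / T with hu
    have hu0 : 0 ≤ u := div_nonneg hs.1 hT.le
    have hu1 : u ≤ 1 := (div_le_one hT).2 hs.2
    have huT : u * T = s := div_mul_cancel₀ s hT.ne'
    have harg : 0 + u * (T - 0) = s := by rw [hu]; field_simp; ring
    have e1 : B.σ (γ 0) (γ T) u = γ s := by
      rw [hl1 0 T hT.le u ⟨hu0, hu1⟩, harg]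
    have e2 : B.σ (γ' 0) (γ' T) u = γ' s := by
      rw [hl2 0 T hT.le u ⟨hu0, hu1⟩, harg]
    have hc := (B.convex (γ 0) (γ T) (γ' 0) (γ' T)).2
      (Set.left_mem_Icc.2 zero_le_one) (Set.right_mem_Icc.2 zero_le_one)
      (by linarith : (0:ℝ) ≤ 1 - u) hu0 (by ring)
    simp only [smul_eq_mul, mul_zero, mul_one, zero_add, B.source, B.target] at hc
    rw [e1, e2] at hc
    rw [h0, h0'] at hc
    simp only [dist_self, mul_zero, zero_add] at hc
    calc dist (γ s) (γ' s) ≤ u * dist (γ T) (γ' T) := hc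
      _ ≤ 1 * r₀ := by
          apply mul_le_mul hu1 hd dist_nonneg zero_le_one
      _ = r₀ := one_mul r₀
  -- global bound
  have hD : ∀ t ∈ Set.Icc (0:ℝ) T, ∀ s, dist (γ s) (γ' s) ≤ r₀ + 2 * |s - t| := by
    intro t ht s
    rcases le_or_gt s 0 with hs | hs
    · have : dist (γ s) (γ' s) ≤ dist (γ s) (γ 0) + dist (γ 0) (γ' 0) + dist (γ' 0) (γ' s) :=
        dist_triangle4 _ _ _ _
      rw [hg1, hg2, h0, h0', dist_self] at this
      have habs : |s - (0:ℝ)| = -s := by rw [sub_zero, abs_of_nonpos hs]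
      have habs2 : |(0:ℝ) - s| = -s := by rw [zero_sub, abs_neg, abs_of_nonpos hs]
      rw [habs, habs2] at this
      have : dist (γ s) (γ' s) ≤ -2 * s := by linarith
      have h2 : |s - t| = t - s := by rw [abs_of_nonpos (by linarith [ht.1])]; ring
      rw [h2]; linarith [ht.1]
    rcases le_or_gt s T with hsT | hsT
    · have h1 := hmid s ⟨hs.le, hsT⟩
      have h2 : (0:ℝ) ≤ 2 * |s - t| := by positivity
      linarith
    · have : dist (γ s) (γ' s) ≤ dist (γ s) (γ T) + dist (γ T) (γ' T) + dist (γ' T) (γ' s) :=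
        dist_triangle4 _ _ _ _
      rw [hg1, hg2] at this
      have habs : |s - T| = s - T := abs_of_nonneg (by linarith)
      have habs2 : |T - s| = s - T := by rw [abs_of_nonpos (by linarith)]; ring
      rw [habs, habs2] at this
      have h2 : |s - t| = s - t := abs_of_nonneg (by linarith [ht.2])
      rw [h2]; linarith [ht.2]
  -- continuity of D
  have hLip1 : Continuous γ := by
    apply LipschitzWith.continuous (K := 1)
    apply LipschitzWith.of_dist_le_mul
    intro a b
    rw [hg1 a b]
    simp [Real.dist_eq]
  have hLip2 : Continuous γ' := by
    apply LipschitzWith.continuous (K := 1)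
    apply LipschitzWith.of_dist_le_mul
    intro a b
    rw [hg2 a b]
    simp [Real.dist_eq]
  -- the bound on each integral
  have hmajint : Integrable (fun s => (r₀ + 2 * |s|) * f s) := by
    have := (hint.const_mul r₀).add hmom
    apply this.congr
    filter_upwards with s
    simp only [Pi.add_apply]
    ring
  have hI : ∀ t ∈ Set.Icc (0:ℝ) T,
      (∫ s, dist (γ s) (γ' s) * f (s - t)) ≤ r₀ + ∫ s, 2 * |s| * f s := by
    intro t ht
    have hmaj : Integrable (fun s => (r₀ + 2 * |s - t|) * f (s - t)) :=
      hmajint.comp_sub_right t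
    have hlhs : Integrable (fun s => dist (γ s) (γ' s) * f (s - t)) := by
      apply hmaj.mono'
      · exact ((hLip1.dist hLip2).mul (hcont.comp (continuous_id.sub continuous_const))).aestronglyMeasurable
      · filter_upwards with s
        rw [Real.norm_eq_abs, abs_of_nonneg (mul_nonneg dist_nonneg (hpos _).le)]
        exact mul_le_mul_of_nonneg_right (hD t ht s) (hpos _).le
    have hle : (∫ s, dist (γ s) (γ' s) * f (s - t)) ≤ ∫ s, (r₀ + 2 * |s - t|) * f (s - t) := by
      apply integral_mono hlhs hmaj
      intro s
      exact mul_le_mul_of_nonneg_right (hD t ht s) (hpos _).le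
    have heq : (∫ s, (r₀ + 2 * |s - t|) * f (s - t)) = ∫ s, (r₀ + 2 * |s|) * f s :=
      integral_sub_right_eq_self (fun s => (r₀ + 2 * |s|) * f s) t
    have heq2 : (∫ s, (r₀ + 2 * |s|) * f s) = r₀ + ∫ s, 2 * |s| * f s := by
      have : (∫ s, (r₀ + 2 * |s|) * f s) = (∫ s, r₀ * f s + 2 * |s| * f s) := by
        congr 1; funext s; ring
      rw [this, integral_add (hint.const_mul r₀) hmom, integral_const_mul, hone, mul_one]
    rw [heq, heq2] at hle
    exact hle
  apply Real.sSup_le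
  · rintro v ⟨t, ht, rfl⟩
    exact hI t ht
  · linarith

/-- Let `(X,σ)` be a complete GCB-space, `x ∈ X`, `T > 0`, `E` an
`r₀`-dense subset of the sphere `S(x,T)`, and for each `y ∈ E` let `g y` be a
`σ`-geodesic line through `x` at time `0` with `g y T = y`. Then for every `f ∈ ℱ` the
family `{g y}_{y∈E}` is `(r₀ + C(f))`-dense in `Geod_σ(x)` with respect to `f^T`, where
`C(f) = ∫ 2|s| f(s) ds`. Consequently
`Cov_{f^T}(Geod_σ(x), r₀ + C(f)) ≤ Cov(S(x,T), r₀)`. -/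
theorem dense_family_of_sphere_net {X : Type*} [MetricSpace X] [CompleteSpace X]
    (B : GCB X) (x : X) (T r₀ : ℝ) (hT : 0 < T) (hr₀ : 0 < r₀)
    (f : ℝ → ℝ) (hcont : Continuous f) (hpos : ∀ s, 0 < f s)
    (heven : ∀ s, f (-s) = f s) (hint : Integrable f) (hone : ∫ s, f s = 1)
    (hmom : Integrable (fun s => 2 * |s| * f s))
    (E : Set X) (hE : E ⊆ Metric.sphere x T)
    (hdense : ∀ y ∈ Metric.sphere x T, ∃ z ∈ E, dist y z ≤ r₀)
    (g : X → ℝ → X)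
    (hg : ∀ y ∈ E, IsSigmaLine B.toConvexBicombing (g y) ∧ g y 0 = x ∧ g y T = y) :
    (∀ γ ∈ geodThru B.toConvexBicombing x,
        ∃ y ∈ E, fdT f T γ (g y) ≤ r₀ + ∫ s, 2 * |s| * f s) ∧
      covF f T (r₀ + ∫ s, 2 * |s| * f s) (geodThru B.toConvexBicombing x) ≤
        covNum (Metric.sphere x T) r₀ := by
  classical
  set C := ∫ s, 2 * |s| * f s with hC
  have main : ∀ γ ∈ geodThru B.toConvexBicombing x, ∀ z ∈ Metric.sphere x T,
      dist (γ T) z ≤ r₀ → ∀ γ' : ℝ → X, IsSigmaLine B.toConvexBicombing γ' → γ' 0 = x →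
      γ' T = z → fdT f T γ γ' ≤ r₀ + C := by
    rintro γ ⟨hsig, h0⟩ z hz hdz γ' hsig' h0' hT'
    exact key B.toConvexBicombing x T r₀ hT hr₀.le f hcont hpos hint hone hmom
      γ γ' hsig hsig' h0 h0' (by rw [hT']; exact hdz)
  have hsphere : ∀ γ ∈ geodThru B.toConvexBicombing x, γ T ∈ Metric.sphere x T := by
    rintro γ ⟨⟨hgeod, -⟩, h0⟩
    have := hgeod T 0
    rw [h0] at this
    simp only [Metric.mem_sphere]
    rw [this, sub_zero, abs_of_pos hT]
  constructor
  · intro γ hγ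
    obtain ⟨z, hzE, hdz⟩ := hdense (γ T) (hsphere γ hγ)
    obtain ⟨hsig', h0', hT'⟩ := hg z hzE
    exact ⟨z, hzE, main γ hγ z (hE hzE) hdz (g z) hsig' h0' hT'⟩
  · rw [covNum]
    apply le_iInf
    rintro ⟨S, hSsub, hSdense⟩
    have hline : ∀ z ∈ Metric.sphere x T, ∃ γ : ℝ → X,
        IsSigmaLine B.toConvexBicombing γ ∧ γ 0 = x ∧ γ T = z := by
      intro z hz
      obtain ⟨γ, hγ, h0, hzz⟩ := B.complete x z
      have hd : dist x z = T := by rw [dist_comm]; exact hz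
      exact ⟨γ, hγ, h0, by rw [← hd]; exact hzz⟩
    choose! G hG1 hG2 hG3 using hline
    have hsub : G '' S ⊆ geodThru B.toConvexBicombing x := by
      rintro - ⟨z, hzS, rfl⟩
      exact ⟨hG1 z (hSsub hzS), hG2 z (hSsub hzS)⟩
    have hdense' : ∀ γ ∈ geodThru B.toConvexBicombing x,
        ∃ γ' ∈ G '' S, fdT f T γ γ' ≤ r₀ + C := by
      intro γ hγ
      obtain ⟨z, hzS, hdz⟩ := hSdense (γ T) (hsphere γ hγ)
      refine ⟨G z, ⟨z, hzS, rfl⟩, ?_⟩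
      exact main γ hγ z (hSsub hzS) hdz (G z) (hG1 z (hSsub hzS))
        (hG2 z (hSsub hzS)) (hG3 z (hSsub hzS))
    calc covF f T (r₀ + C) (geodThru B.toConvexBicombing x)
        ≤ (G '' S).encard := by rw [covF]; exact iInf_le (fun S : {S : Set (ℝ → X) // S ⊆ geodThru B.toConvexBicombing x ∧ ∀ γ ∈ geodThru B.toConvexBicombing x, ∃ γ' ∈ S, fdT f T γ γ' ≤ r₀ + C} => (S : Set (ℝ → X)).encard) ⟨G '' S, hsub, hdense'⟩
      _ ≤ S.encard := Set.encard_image_le _ _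
end
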